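/- For n ≥ 5, every generating set G of IOF_n^par contains, for each i ∈ {1,...,n−4}, a non-partial-identity element γ_i with domain J_i = {1,...,i} ∪ {i+4,...,n} and a non-partial-identity element β_i with image J_i; moreover all these 2(n−4) elements γ_1,...,γ_{n−4}, β_1,...,β_{n−4} are pairwise distinct. -/

import Mathlib

/-- A partial injection on `{1,...,n}`, represented by its graph. -/
structure PInj (n : ℕ) where
  R : ℕ → ℕ → Prop
  memL : ∀ ⦃x y⦄, R x y → x ∈ Set.Icc 1 n
  memR : ∀ ⦃x y⦄, R x y → y ∈ Set.Icc 1 n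
  func : ∀ ⦃x y y'⦄, R x y → R x y' → y = y'
  inj : ∀ ⦃x x' y⦄, R x y → R x' y → x = x'

namespace PInj

variable {n : ℕ}

@[ext] theorem ext {a b : PInj n} (h : ∀ x y, a.R x y ↔ b.R x y) : a = b := by
  cases a; cases b
  simp only [mk.injEq]
  funext x y
  exact propext (h x y)

instance : Mul (PInj n) :=
  ⟨fun a b =>
    { R := fun x z => ∃ y, a.R x y ∧ b.R y z
      memL := by rintro x z ⟨y, h1, _⟩; exact a.memL h1
      memR := by rintro x z ⟨y, _, h2⟩; exact b.memR h2
      func := by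
        rintro x z z' ⟨y, h1, h2⟩ ⟨y', h1', h2'⟩
        obtain rfl := a.func h1 h1'
        exact b.func h2 h2'
      inj := by
        rintro x x' z ⟨y, h1, h2⟩ ⟨y', h1', h2'⟩
        obtain rfl := b.inj h2 h2'
        exact a.inj h1 h1' }⟩

instance : One (PInj n) :=
  ⟨{ R := fun x y => x ∈ Set.Icc 1 n ∧ y = x
     memL := by rintro x y ⟨h, rfl⟩; exact h
     memR := by rintro x y ⟨h, rfl⟩; exact h
     func := by rintro x y y' ⟨_, rfl⟩ ⟨_, rfl⟩; rfl
     inj := by rintro x x' y ⟨_, rfl⟩ ⟨_, h⟩; exact h }⟩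

instance : Monoid (PInj n) where
  mul_assoc a b c := by
    ext x y
    constructor
    · rintro ⟨z, ⟨w, h1, h2⟩, h3⟩; exact ⟨w, h1, z, h2, h3⟩
    · rintro ⟨w, h1, z, h2, h3⟩; exact ⟨z, ⟨w, h1, h2⟩, h3⟩
  one_mul a := by
    ext x y
    constructor
    · rintro ⟨z, ⟨_, rfl⟩, h⟩; exact h
    · intro h; exact ⟨x, ⟨a.memL h, rfl⟩, h⟩
  mul_one a := by
    ext x y
    constructor
    · rintro ⟨z, h, _, rfl⟩; exact h
    · intro h; exact ⟨y, h, a.memR h, rfl⟩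

/-- The inverse of a partial injection. -/
def inv (a : PInj n) : PInj n where
  R := fun x y => a.R y x
  memL := by intro x y h; exact a.memR h
  memR := by intro x y h; exact a.memL h
  func := by intro x y y' h h'; exact a.inj h h'
  inj := by intro x x' y h h'; exact a.func h h'

/-- The domain of a partial injection. -/
def dom (a : PInj n) : Set ℕ := {x | ∃ y, a.R x y}

/-- The image of a partial injection. -/
def im (a : PInj n) : Set ℕ := {y | ∃ x, a.R x y}

end PInj

/-- The strict fence (zig-zag) order on `{1,...,n}`: `x ≺ y` iff `x` is odd and
`x`, `y` are adjacent.  It is generated by `i ≺ i+1` for odd `i` and `i+1 ≺ i`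
for even `i`. -/
def FenceLt (x y : ℕ) : Prop := Odd x ∧ (y = x + 1 ∨ x = y + 1)

/-- Membership in `IOF_n^par`: order-preserving, parity-preserving,
fence-preserving, and with fence-preserving inverse. -/
def IsIOF {n : ℕ} (a : PInj n) : Prop :=
  (∀ ⦃x y x' y'⦄, a.R x y → a.R x' y' → x < x' → y < y') ∧
  (∀ ⦃x y⦄, a.R x y → x % 2 = y % 2) ∧
  (∀ ⦃x y x' y'⦄, a.R x y → a.R x' y' → FenceLt x x' → FenceLt y y') ∧
  (∀ ⦃x y x' y'⦄, a.R x y → a.R x' y' → FenceLt y y' → FenceLt x x')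

/-- A partial identity: every point of the domain is fixed. -/
def IsPartialId {n : ℕ} (a : PInj n) : Prop := ∀ ⦃x y⦄, a.R x y → y = x

/-- The partial identity `v_i` with domain `{1,...,n} \ {i}`. -/
def vMap (n i : ℕ) : PInj n where
  R := fun x y => x ∈ Set.Icc 1 n ∧ x ≠ i ∧ y = x
  memL := by rintro x y ⟨h, _, rfl⟩; exact h
  memR := by rintro x y ⟨h, _, rfl⟩; exact h
  func := by rintro x y y' ⟨_, _, rfl⟩ ⟨_, _, rfl⟩; rfl
  inj := by rintro x x' y ⟨_, _, rfl⟩ ⟨_, _, h⟩; exact h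

/-- The map `u_i` with domain `{1,...,i} ∪ {i+4,...,n}`, sending `ρ ↦ ρ+2` for
`ρ ≤ i` and `ρ ↦ ρ` for `ρ ≥ i+4`. -/
def uMap (n i : ℕ) : PInj n where
  R := fun x y => x ∈ Set.Icc 1 n ∧ y ∈ Set.Icc 1 n ∧
        ((x ≤ i ∧ y = x + 2) ∨ (i + 4 ≤ x ∧ y = x))
  memL := by rintro x y ⟨h, _, _⟩; exact h
  memR := by rintro x y ⟨_, h, _⟩; exact h
  func := by
    rintro x y y' ⟨_, _, (⟨hx, rfl⟩ | ⟨hx, rfl⟩)⟩ ⟨_, _, (⟨hx', rfl⟩ | ⟨hx', rfl⟩)⟩ <;> omega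
  inj := by
    rintro x x' y ⟨_, _, (⟨hx, rfl⟩ | ⟨hx, rfl⟩)⟩ ⟨_, _, (⟨hx', h'⟩ | ⟨hx', h'⟩)⟩ <;> omega

/-- The set `J_i = {1,...,i} ∪ {i+4,...,n}`. -/
def Jset (n i : ℕ) : Set ℕ := {x | (1 ≤ x ∧ x ≤ i) ∨ (i + 4 ≤ x ∧ x ≤ n)}

/-- `G` is a generating set of the monoid `IOF_n^par`: it consists of elements of
`IOF_n^par` and every element of `IOF_n^par` is a finite product of elements of `G`. -/
def Generates (n : ℕ) (G : Set (PInj n)) : Prop :=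
  (∀ g ∈ G, IsIOF g) ∧
  ∀ a : PInj n, IsIOF a →
    ∃ l : List (PInj n), (∀ b ∈ l, b ∈ G) ∧ l.prod = a

/-! Fence preservation forces an element `a` of `IOF_n^par` to send consecutive points of its
domain to consecutive points, and its inverse forbids sending non-adjacent points to adjacent
ones. Hence if `J_i ⊆ dom a`, then `a` translates `{1,...,i}` by some even `c ≥ 0` and
`{i+4,...,n}` by some even `-e ≤ 0`, with `c + e ≤ 2` by monotonicity. A further point of the
domain between `i` and `i+4`, or both `1` and `n` lying in the image, forces `c = e = 0`, and then
`a` is a partial identity.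

The map `u_i` (`ρ ↦ ρ+2` on `{1,...,i}`, identity on `{i+4,...,n}`) has domain `J_i` and is not a
partial identity. In a factorisation of `u_i` into generators, the first factor that is not a
partial identity has domain containing `J_i`, hence equal to `J_i`: this is `γ_i`. Dually, the
last such factor of `u_i⁻¹` is `β_i`. Since `J_i` determines `i`, the `γ_i` are distinct, and so
are the `β_j`; a `γ_i = β_j` would have `1` and `n` in its image, so it would be a partial
identity. -/

section

variable {n : ℕ}

namespace PInj

theorem dom_mul_subset_left (a b : PInj n) : (a * b).dom ⊆ a.dom := by
  rintro x ⟨z, y, h, -⟩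
  exact ⟨y, h⟩

theorem im_mul_subset_right (a b : PInj n) : (a * b).im ⊆ b.im := by
  rintro z ⟨x, y, -, h⟩
  exact ⟨y, h⟩

theorem im_inv (a : PInj n) : a.inv.im = a.dom := rfl

theorem dom_inv (a : PInj n) : a.inv.dom = a.im := rfl

end PInj

theorem isPartialId_one : IsPartialId (1 : PInj n) := fun _ _ h => h.2

theorem isPartialId_inv_iff {a : PInj n} : IsPartialId a.inv ↔ IsPartialId a :=
  ⟨fun h _ _ hxy => (h hxy).symm, fun h _ _ hxy => (h hxy).symm⟩

namespace IsPartialId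

variable {a b : PInj n}

theorem mul (ha : IsPartialId a) (hb : IsPartialId b) : IsPartialId (a * b) := by
  rintro x z ⟨y, h, h'⟩
  rw [hb h', ha h]

theorem dom_mul_subset (ha : IsPartialId a) : (a * b).dom ⊆ b.dom := by
  rintro x ⟨z, y, h, h'⟩
  rw [← ha h]
  exact ⟨z, h'⟩

theorem im_mul_subset (hb : IsPartialId b) : (a * b).im ⊆ a.im := by
  rintro z ⟨x, y, h, h'⟩
  rw [hb h']
  exact ⟨x, h⟩

end IsPartialId

theorem exists_mem_not_isPartialId_dom_subset {l : List (PInj n)}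
    (h : ¬ IsPartialId l.prod) : ∃ g ∈ l, ¬ IsPartialId g ∧ l.prod.dom ⊆ g.dom := by
  induction l with
  | nil => exact absurd isPartialId_one h
  | cons a l ih =>
    rw [List.prod_cons] at h ⊢
    by_cases ha : IsPartialId a
    · obtain ⟨g, hg, hgn, hsub⟩ := ih fun hl => h (ha.mul hl)
      exact ⟨g, List.mem_cons_of_mem a hg, hgn, ha.dom_mul_subset.trans hsub⟩
    · exact ⟨a, List.mem_cons_self, ha, PInj.dom_mul_subset_left a _⟩

theorem exists_mem_not_isPartialId_im_subset {l : List (PInj n)}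
    (h : ¬ IsPartialId l.prod) : ∃ g ∈ l, ¬ IsPartialId g ∧ l.prod.im ⊆ g.im := by
  induction l using List.reverseRecOn with
  | nil => exact absurd isPartialId_one h
  | append_singleton l a ih =>
    rw [List.prod_append, List.prod_singleton] at h ⊢
    by_cases ha : IsPartialId a
    · obtain ⟨g, hg, hgn, hsub⟩ := ih fun hl => h (hl.mul ha)
      exact ⟨g, List.mem_append_left _ hg, hgn, ha.im_mul_subset.trans hsub⟩
    · exact ⟨a, by simp, ha, PInj.im_mul_subset_right _ a⟩

namespace IsIOF

variable {a : PInj n} {x y x' y' : ℕ}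

theorem lt_of_lt (ha : IsIOF a) (h : a.R x y) (h' : a.R x' y') (hx : x < x') : y < y' :=
  ha.1 h h' hx

theorem mod_two_eq (ha : IsIOF a) (h : a.R x y) : x % 2 = y % 2 :=
  ha.2.1 h

theorem inv (ha : IsIOF a) : IsIOF a.inv := by
  obtain ⟨hmono, hpar, hfence, hfence_inv⟩ := ha
  refine ⟨fun x y x' y' h h' hx => ?_, fun x y h => (hpar h).symm,
    fun x y x' y' h h' => hfence_inv h h', fun x y x' y' h h' => hfence h h'⟩
  rcases lt_trichotomy y y' with hy | rfl | hy
  · exact hy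
  · exact absurd (a.func h h') hx.ne
  · exact absurd (hmono h' h hy) hx.not_gt

theorem eq_succ_of_R_succ (ha : IsIOF a) (h : a.R x y) (h' : a.R (x + 1) y') :
    y' = y + 1 := by
  have hy : y < y' := ha.lt_of_lt h h' x.lt_succ_self
  rcases Nat.even_or_odd x with hx | hx
  · have := (ha.2.2.1 h' h ⟨hx.add_one, Or.inr rfl⟩).2
    omega
  · have := (ha.2.2.1 h h' ⟨hx, Or.inl rfl⟩).2
    omega

theorem ne_succ_of_add_two_le (ha : IsIOF a) (h : a.R x y) (h' : a.R x' y')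
    (hx : x + 2 ≤ x') : y' ≠ y + 1 := by
  rintro rfl
  rcases Nat.even_or_odd y with hy | hy
  · have := (ha.2.2.2 h' h ⟨hy.add_one, Or.inr rfl⟩).2
    omega
  · have := (ha.2.2.2 h h' ⟨hy, Or.inl rfl⟩).2
    omega

theorem R_add (ha : IsIOF a) (h : a.R x y) {k : ℕ} (hdom : Set.Icc x (x + k) ⊆ a.dom) :
    a.R (x + k) (y + k) := by
  induction k with
  | zero => exact h
  | succ k ih =>
    obtain ⟨y', hy'⟩ := hdom ⟨by omega, le_rfl⟩
    have hk := ih ((Set.Icc_subset_Icc_right (by omega)).trans hdom)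
    rwa [ha.eq_succ_of_R_succ hk hy'] at hy'

theorem R_of_Icc_subset_dom (ha : IsIOF a) (h : a.R x y) {r t : ℕ}
    (hdom : Set.Icc x r ⊆ a.dom) (ht : t ∈ Set.Icc x r) : a.R t (y + (t - x)) := by
  obtain ⟨hxt, htr⟩ := ht
  have := ha.R_add h (k := t - x) ((Set.Icc_subset_Icc_right (by omega)).trans hdom)
  rwa [Nat.add_sub_cancel' hxt] at this

theorem eq_one_of_R_one_of_one_mem_im (ha : IsIOF a) (h : a.R 1 y) (him : 1 ∈ a.im) : y = 1 := by
  obtain ⟨x, hx⟩ := him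
  rcases (a.memL hx).1.eq_or_lt with rfl | hlt
  · exact a.func h hx
  · exact absurd (ha.lt_of_lt h hx hlt) (a.memR h).1.not_gt

theorem eq_of_R_of_mem_im (ha : IsIOF a) (h : a.R n y) (him : n ∈ a.im) : y = n := by
  obtain ⟨x, hx⟩ := him
  rcases (a.memL hx).2.eq_or_lt with rfl | hlt
  · exact a.func h hx
  · exact absurd (ha.lt_of_lt hx h hlt) (a.memR h).2.not_gt

end IsIOF

section Jset

variable {i : ℕ}

theorem Icc_subset_Jset_left : Set.Icc 1 i ⊆ Jset n i := fun _ hx => Or.inl hx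

theorem Icc_subset_Jset_right : Set.Icc (i + 4) n ⊆ Jset n i := fun _ hx => Or.inr hx

theorem Jset_injective : Function.Injective (Jset n) := by
  intro i j h
  have hi := Set.ext_iff.mp h (i + 1)
  have hj := Set.ext_iff.mp h (j + 1)
  simp only [Jset, Set.mem_ofPred_eq] at hi hj
  omega

namespace IsIOF

variable {a : PInj n}

theorem isPartialId_of_R_one_of_R_add_four (ha : IsIOF a) (hi : 1 ≤ i)
    (hJ : Jset n i ⊆ a.dom) (h1 : a.R 1 1) (h4 : a.R (i + 4) (i + 4)) : IsPartialId a := by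
  have hleft : ∀ t ∈ Set.Icc 1 i, a.R t t := fun t ht => by
    simpa [ht.1] using ha.R_of_Icc_subset_dom h1 (Icc_subset_Jset_left.trans hJ) ht
  have hright : ∀ t ∈ Set.Icc (i + 4) n, a.R t t := fun t ht => by
    simpa [ht.1] using ha.R_of_Icc_subset_dom h4 (Icc_subset_Jset_right.trans hJ) ht
  have hii := hleft i ⟨hi, le_rfl⟩
  intro x y hxy
  obtain ⟨hx1, hxn⟩ := a.memL hxy
  rcases le_or_gt x i with hxi | hxi
  · exact a.func hxy (hleft x ⟨hx1, hxi⟩)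
  rcases le_or_gt (i + 4) x with hx4 | hx4
  · exact a.func hxy (hright x ⟨hx4, hxn⟩)
  obtain rfl | rfl | rfl : x = i + 1 ∨ x = i + 2 ∨ x = i + 3 := by omega
  · exact ha.eq_succ_of_R_succ hii hxy
  · have := ha.lt_of_lt hii hxy (by omega)
    have := ha.lt_of_lt hxy h4 (by omega)
    have := ha.mod_two_eq hxy
    omega
  · have := ha.eq_succ_of_R_succ hxy h4
    omega

theorem isPartialId_of_mem_dom (ha : IsIOF a) (hi : 1 ≤ i) (hin : i + 4 ≤ n)
    (hJ : Jset n i ⊆ a.dom) {z : ℕ} (hz : z ∈ a.dom) (hiz : i < z) (hzi : z < i + 4) :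
    IsPartialId a := by
  obtain ⟨y, h1⟩ := hJ (Icc_subset_Jset_left ⟨le_rfl, hi⟩)
  obtain ⟨w, h4⟩ := hJ (Icc_subset_Jset_right ⟨le_rfl, hin⟩)
  suffices y = 1 ∧ w = i + 4 by
    obtain ⟨rfl, rfl⟩ := this
    exact ha.isPartialId_of_R_one_of_R_add_four hi hJ h1 h4
  have hRi := ha.R_of_Icc_subset_dom h1 (Icc_subset_Jset_left.trans hJ) ⟨hi, le_rfl⟩
  have hRn := ha.R_of_Icc_subset_dom h4 (Icc_subset_Jset_right.trans hJ) ⟨hin, le_rfl⟩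
  have hy := (a.memR h1).1
  have hw := (a.memR hRn).2
  have hy_odd := ha.mod_two_eq h1
  have hw_par := ha.mod_two_eq h4
  obtain ⟨v, hz⟩ := hz
  obtain rfl | rfl | rfl : z = i + 1 ∨ z = i + 2 ∨ z = i + 3 := by omega
  · have := ha.eq_succ_of_R_succ hRi hz
    have := ha.lt_of_lt hz h4 (by omega)
    have := ha.ne_succ_of_add_two_le hz h4 (by omega)
    omega
  · have := ha.lt_of_lt hRi hz (by omega)
    have := ha.lt_of_lt hz h4 (by omega)
    have := ha.mod_two_eq hz
    omega
  · have := ha.eq_succ_of_R_succ hz h4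
    have := ha.lt_of_lt hRi hz (by omega)
    have := ha.ne_succ_of_add_two_le hRi hz (by omega)
    omega

theorem dom_eq_Jset (ha : IsIOF a) (hna : ¬ IsPartialId a) (hi : 1 ≤ i) (hin : i + 4 ≤ n)
    (hJ : Jset n i ⊆ a.dom) : a.dom = Jset n i := by
  refine hJ.antisymm' fun x hx => ?_
  obtain ⟨y, hxy⟩ := hx
  obtain ⟨hx1, hxn⟩ := a.memL hxy
  by_contra hxJ
  have hix : i < x := by by_contra; exact hxJ (Or.inl ⟨hx1, by omega⟩)
  have hxi : x < i + 4 := by by_contra; exact hxJ (Or.inr ⟨by omega, hxn⟩)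
  exact hna (ha.isPartialId_of_mem_dom hi hin hJ ⟨y, hxy⟩ hix hxi)

theorem isPartialId_of_one_mem_im_of_mem_im (ha : IsIOF a) (hi : 1 ≤ i) (hin : i + 4 ≤ n)
    (hJ : Jset n i ⊆ a.dom) (h1 : 1 ∈ a.im) (hn : n ∈ a.im) : IsPartialId a := by
  obtain ⟨y, hR1⟩ := hJ (Icc_subset_Jset_left ⟨le_rfl, hi⟩)
  obtain ⟨w, hR4⟩ := hJ (Icc_subset_Jset_right ⟨le_rfl, hin⟩)
  have hRn := ha.R_of_Icc_subset_dom hR4 (Icc_subset_Jset_right.trans hJ) ⟨hin, le_rfl⟩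
  obtain rfl := ha.eq_one_of_R_one_of_one_mem_im hR1 h1
  have hw := ha.eq_of_R_of_mem_im hRn hn
  obtain rfl : w = i + 4 := by omega
  exact ha.isPartialId_of_R_one_of_R_add_four hi hJ hR1 hR4

end IsIOF

theorem isIOF_uMap (n i : ℕ) : IsIOF (uMap n i) := by
  refine ⟨?_, ?_, ?_, ?_⟩
  · rintro x y x' y' ⟨-, -, h⟩ ⟨-, -, h'⟩ hlt
    omega
  · rintro x y ⟨-, -, ⟨-, rfl⟩ | ⟨-, rfl⟩⟩ <;> omega
  all_goals
    rintro x y x' y' ⟨-, -, h⟩ ⟨-, -, h'⟩ ⟨hodd, hadj⟩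
    rw [Nat.odd_iff] at hodd
    rcases h with ⟨_, rfl⟩ | ⟨_, rfl⟩ <;> rcases h' with ⟨_, rfl⟩ | ⟨_, rfl⟩ <;>
      exact ⟨Nat.odd_iff.mpr (by omega), by omega⟩

theorem not_isPartialId_uMap {i : ℕ} (hi : 1 ≤ i) (hn : 3 ≤ n) : ¬ IsPartialId (uMap n i) :=
  fun h => absurd (h ⟨⟨le_rfl, by omega⟩, ⟨by omega, hn⟩, Or.inl ⟨hi, rfl⟩⟩) (by omega)

theorem Jset_subset_dom_uMap {i : ℕ} (hin : i + 2 ≤ n) : Jset n i ⊆ (uMap n i).dom := by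
  rintro x (⟨hx1, hxi⟩ | ⟨hix, hxn⟩)
  · exact ⟨x + 2, ⟨hx1, by omega⟩, ⟨by omega, by omega⟩, Or.inl ⟨hxi, rfl⟩⟩
  · exact ⟨x, ⟨by omega, hxn⟩, ⟨by omega, hxn⟩, Or.inr ⟨hix, rfl⟩⟩

end Jset

namespace Generates

variable {G : Set (PInj n)} {i : ℕ}

theorem exists_dom_eq_Jset (hG : Generates n G) (hi : 1 ≤ i) (hin : i + 4 ≤ n) :
    ∃ g ∈ G, ¬ IsPartialId g ∧ g.dom = Jset n i := by
  obtain ⟨l, hlG, hl⟩ := hG.2 _ (isIOF_uMap n i)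
  obtain ⟨g, hgl, hg, hsub⟩ := exists_mem_not_isPartialId_dom_subset
    (hl ▸ not_isPartialId_uMap hi (by omega))
  refine ⟨g, hlG g hgl, hg, (hG.1 g (hlG g hgl)).dom_eq_Jset hg hi hin ?_⟩
  exact (Jset_subset_dom_uMap (by omega)).trans (hl ▸ hsub)

theorem exists_im_eq_Jset (hG : Generates n G) (hi : 1 ≤ i) (hin : i + 4 ≤ n) :
    ∃ g ∈ G, ¬ IsPartialId g ∧ g.im = Jset n i := by
  obtain ⟨l, hlG, hl⟩ := hG.2 _ (isIOF_uMap n i).inv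
  obtain ⟨g, hgl, hg, hsub⟩ := exists_mem_not_isPartialId_im_subset
    (hl ▸ isPartialId_inv_iff.not.mpr (not_isPartialId_uMap hi (by omega)))
  rw [hl, PInj.im_inv] at hsub
  refine ⟨g, hlG g hgl, hg, ?_⟩
  rw [← PInj.dom_inv]
  exact (hG.1 g (hlG g hgl)).inv.dom_eq_Jset (isPartialId_inv_iff.not.mpr hg) hi hin
    ((Jset_subset_dom_uMap (by omega)).trans hsub)

end Generates

end

theorem stmt12_general (n : ℕ) (G : Set (PInj n)) (hG : Generates n G) :
    ∃ γ β : ℕ → PInj n,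
      (∀ i ∈ Set.Icc 1 (n - 4),
        γ i ∈ G ∧ ¬ IsPartialId (γ i) ∧ PInj.dom (γ i) = Jset n i) ∧
      (∀ i ∈ Set.Icc 1 (n - 4),
        β i ∈ G ∧ ¬ IsPartialId (β i) ∧ PInj.im (β i) = Jset n i) ∧
      (∀ i ∈ Set.Icc 1 (n - 4), ∀ j ∈ Set.Icc 1 (n - 4), i ≠ j → γ i ≠ γ j) ∧
      (∀ i ∈ Set.Icc 1 (n - 4), ∀ j ∈ Set.Icc 1 (n - 4), i ≠ j → β i ≠ β j) ∧
      (∀ i ∈ Set.Icc 1 (n - 4), ∀ j ∈ Set.Icc 1 (n - 4), γ i ≠ β j) := by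
  have add_four_le : ∀ i ∈ Set.Icc 1 (n - 4), i + 4 ≤ n := fun i hi => by
    obtain ⟨h1, h2⟩ := hi
    omega
  choose! γ hγG hγ hγdom using fun i (hi : i ∈ Set.Icc 1 (n - 4)) =>
    hG.exists_dom_eq_Jset hi.1 (add_four_le i hi)
  choose! β hβG hβ hβim using fun i (hi : i ∈ Set.Icc 1 (n - 4)) =>
    hG.exists_im_eq_Jset hi.1 (add_four_le i hi)
  refine ⟨γ, β, fun i hi => ⟨hγG i hi, hγ i hi, hγdom i hi⟩,
    fun i hi => ⟨hβG i hi, hβ i hi, hβim i hi⟩, ?_, ?_, ?_⟩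
  · exact fun i hi j hj hij h => hij (Jset_injective (by rw [← hγdom i hi, h, hγdom j hj]))
  · exact fun i hi j hj hij h => hij (Jset_injective (by rw [← hβim i hi, h, hβim j hj]))
  · intro i hi j hj h
    have hin := add_four_le i hi
    have hjn := add_four_le j hj
    have himJ : (γ i).im = Jset n j := by rw [h, hβim j hj]
    refine hγ i hi ((hG.1 _ (hγG i hi)).isPartialId_of_one_mem_im_of_mem_im hi.1 hin
      (hγdom i hi).symm.subset ?_ ?_)
    · exact himJ ▸ Icc_subset_Jset_left ⟨le_rfl, hj.1⟩
    · exact himJ ▸ Icc_subset_Jset_right ⟨hjn, le_rfl⟩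

/-- every generating set of `IOF_n^par` (n ≥ 5) contains, for each
`i ∈ {1,...,n-4}`, a non-partial-identity `γ_i` with domain `J_i` and a
non-partial-identity `β_i` with image `J_i`, all `2(n-4)` of them pairwise distinct. -/
theorem stmt12 (n : ℕ) (hn : 5 ≤ n) (G : Set (PInj n)) (hG : Generates n G) :
    ∃ γ β : ℕ → PInj n,
      (∀ i ∈ Set.Icc 1 (n - 4),
        γ i ∈ G ∧ ¬ IsPartialId (γ i) ∧ PInj.dom (γ i) = Jset n i) ∧
      (∀ i ∈ Set.Icc 1 (n - 4),
        β i ∈ G ∧ ¬ IsPartialId (β i) ∧ PInj.im (β i) = Jset n i) ∧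
      (∀ i ∈ Set.Icc 1 (n - 4), ∀ j ∈ Set.Icc 1 (n - 4), i ≠ j → γ i ≠ γ j) ∧
      (∀ i ∈ Set.Icc 1 (n - 4), ∀ j ∈ Set.Icc 1 (n - 4), i ≠ j → β i ≠ β j) ∧
      (∀ i ∈ Set.Icc 1 (n - 4), ∀ j ∈ Set.Icc 1 (n - 4), γ i ≠ β j) :=
  stmt12_general n G hG
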